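/- arXiv:2510.09765 — 2 statements merged into one kernel-verified Lean document; each statement's English description precedes it below -/
import Mathlib

section
/- For any n×n unitary Clifford group element G with G not proportional to the identity, |Tr(G)| ≤ n/√2, where n = 2^m. Consequently the minimum distance of the projective Clifford group under d(U,V) = sqrt(1 − |Tr(U*V)|/n) is at least sqrt(1 − 1/√2). -/
/-!
Conjugation by a Clifford unitary `G` permutes the Pauli operators up to phases,
`Gᴴ D(c) G = ε(c) D(F c)`, with `F` additive on the phase space `(ZMod 2 × ZMod 2)^m`.
Twirling over the Pauli operators sends any `M` to `2^m tr M • 1`; pairing the twirl of `G`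
with `Gᴴ` gives `2^m |tr G|² = ∑_c ε(c) tr (D(F c) D(c)ᴴ)`, so `|tr G|²` is at most the number
of fixed points of `F`. If `F ≠ id` these form a proper subgroup, of size at most `4^m / 2`.
If `F = id`, either every `ε(c) = 1`, so `G` commutes with all Pauli operators and is a scalar,
or some `ε(c) ≠ 1` and `tr G = ε(c) tr G = 0`.
-/

open Matrix Finset

noncomputable def PX : Matrix (Fin 2) (Fin 2) ℂ := !![0, 1; 1, 0]
noncomputable def PZ : Matrix (Fin 2) (Fin 2) ℂ := !![1, 0; 0, -1]

/-- `D(a,b) = ⊗_j X^{a_j} Z^{b_j}`, realized as a matrix indexed by `Fin m → Fin 2`. -/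
noncomputable def PauliD {m : ℕ} (a b : Fin m → ZMod 2) :
    Matrix (Fin m → Fin 2) (Fin m → Fin 2) ℂ :=
  fun x y => ∏ j, (PX ^ (a j).val * PZ ^ (b j).val) (x j) (y j)

/-- The Pauli group on `m` qubits: matrices `i^κ D(a,b)`. -/
def PauliGroup (m : ℕ) : Set (Matrix (Fin m → Fin 2) (Fin m → Fin 2) ℂ) :=
  {W | ∃ (κ : ℕ) (a b : Fin m → ZMod 2), W = (Complex.I ^ κ) • PauliD a b}

section PiKronecker

variable {ι n R : Type*} [Fintype ι]

def piKronecker [CommMonoid R] (M : ι → Matrix n n R) : Matrix (ι → n) (ι → n) R :=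
  fun x y => ∏ j, M j (x j) (y j)

lemma conjTranspose_piKronecker [CommSemiring R] [StarRing R] (M : ι → Matrix n n R) :
    (piKronecker M)ᴴ = piKronecker fun j => (M j)ᴴ := by
  ext x y
  simp only [piKronecker, conjTranspose_apply, star_prod]

lemma piKronecker_one [DecidableEq n] [CommSemiring R] :
    piKronecker (fun _ : ι => (1 : Matrix n n R)) = 1 := by
  ext x y
  simp only [piKronecker, one_apply, Fintype.prod_ite_zero, funext_iff, prod_const_one]

variable [DecidableEq ι]

lemma sum_piKronecker_apply_mul_star [DecidableEq n] {K : Type*} [Fintype K] [CommSemiring R]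
    [StarRing R] {B : K → Matrix n n R} {r : R}
    (hB : ∀ x x' y y', ∑ k, B k x x' * star (B k y y') = if x = y ∧ x' = y' then r else 0)
    (x x' y y' : ι → n) :
    ∑ c : ι → K, piKronecker (fun j => B (c j)) x x' * star (piKronecker (fun j => B (c j)) y y') =
      if x = y ∧ x' = y' then r ^ Fintype.card ι else 0 := by
  simp only [piKronecker, star_prod, ← prod_mul_distrib]
  rw [← Fintype.prod_sum (fun j k => B k (x j) (x' j) * star (B k (y j) (y' j)))]
  simp only [hB, Fintype.prod_ite_zero, prod_const, card_univ, funext_iff, forall_and]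

variable [Fintype n]

lemma piKronecker_mul [CommSemiring R] (M N : ι → Matrix n n R) :
    piKronecker M * piKronecker N = piKronecker fun j => M j * N j := by
  ext x y
  simp only [piKronecker, mul_apply, Fintype.prod_sum, prod_mul_distrib]

lemma trace_piKronecker [CommSemiring R] (M : ι → Matrix n n R) :
    (piKronecker M).trace = ∏ j, (M j).trace := by
  simp only [trace, Matrix.diag, piKronecker, Fintype.prod_sum]

lemma piKronecker_mem_unitaryGroup [DecidableEq n] [CommRing R] [StarRing R]
    {M : ι → Matrix n n R} (hM : ∀ j, M j ∈ unitaryGroup n R) :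
    piKronecker M ∈ unitaryGroup (ι → n) R := by
  rw [mem_unitaryGroup_iff, star_eq_conjTranspose, conjTranspose_piKronecker, piKronecker_mul]
  simp only [← star_eq_conjTranspose, (mem_unitaryGroup_iff.mp (hM _)), piKronecker_one]

end PiKronecker

lemma sum_mul_mul_conjTranspose_eq_of_completeness {n K R : Type*} [Fintype n] [DecidableEq n]
    [Fintype K] [CommSemiring R] [StarRing R] {B : K → Matrix n n R} {r : R}
    (hB : ∀ x x' y y', ∑ k, B k x x' * star (B k y y') = if x = y ∧ x' = y' then r else 0)
    (M : Matrix n n R) :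
    ∑ k, B k * M * (B k)ᴴ = (r * M.trace) • 1 := by
  ext x y
  have entry : ∀ k,
      (B k * M * (B k)ᴴ) x y = ∑ x', ∑ y', M x' y' * (B k x x' * star (B k y y')) := by
    intro k
    simp only [mul_apply, conjTranspose_apply, sum_mul]
    rw [sum_comm]
    exact sum_congr rfl fun _ _ => sum_congr rfl fun _ _ => by ring
  simp only [Matrix.sum_apply, entry]
  rw [sum_comm]
  simp only [sum_comm (γ := K), ← mul_sum, hB, Matrix.smul_apply, one_apply, smul_eq_mul, trace,
    Matrix.diag]
  by_cases hxy : x = y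
  · subst hxy
    simp [mul_sum, mul_comm]
  · simp [hxy]

noncomputable def pauliQubit (p : ZMod 2 × ZMod 2) : Matrix (Fin 2) (Fin 2) ℂ :=
  PX ^ p.1.val * PZ ^ p.2.val

lemma pauliQubit_eq (p : ZMod 2 × ZMod 2) :
    pauliQubit p =
      let s : ℂ := if p.2 = 0 then 1 else -1
      if p.1 = 0 then !![1, 0; 0, s] else !![0, s; 1, 0] := by
  obtain ⟨a, b⟩ := p
  fin_cases a <;> fin_cases b <;> ext i j <;> fin_cases i <;> fin_cases j <;>
    simp +decide [pauliQubit, PX, PZ, mul_apply, Fin.sum_univ_two, ZMod.val, one_apply]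

lemma pauliQubit_mul (p q : ZMod 2 × ZMod 2) :
    pauliQubit p * pauliQubit q = ((-1 : ℂ) ^ (p.2.val * q.1.val)) • pauliQubit (p + q) := by
  simp only [pauliQubit_eq]
  obtain ⟨a, b⟩ := p; obtain ⟨c, d⟩ := q
  fin_cases a <;> fin_cases b <;> fin_cases c <;> fin_cases d <;> ext i j <;> fin_cases i <;>
    fin_cases j <;> simp +decide [mul_apply, Fin.sum_univ_two, ZMod.val]

lemma pauliQubit_mem_unitaryGroup (p : ZMod 2 × ZMod 2) :
    pauliQubit p ∈ unitaryGroup (Fin 2) ℂ := by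
  rw [mem_unitaryGroup_iff, pauliQubit_eq]
  obtain ⟨a, b⟩ := p
  fin_cases a <;> fin_cases b <;> ext i j <;> fin_cases i <;> fin_cases j <;>
    simp +decide [mul_apply, Fin.sum_univ_two]

lemma trace_pauliQubit_mul_conjTranspose (p q : ZMod 2 × ZMod 2) :
    (pauliQubit p * (pauliQubit q)ᴴ).trace = if p = q then 2 else 0 := by
  simp only [pauliQubit_eq]
  obtain ⟨a, b⟩ := p; obtain ⟨c, d⟩ := q
  fin_cases a <;> fin_cases b <;> fin_cases c <;> fin_cases d <;>
    simp +decide [trace, vecMul, dotProduct, Fin.sum_univ_two] <;> norm_num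

lemma sum_pauliQubit_apply_mul_star (x x' y y' : Fin 2) :
    ∑ p, pauliQubit p x x' * star (pauliQubit p y y') = if x = y ∧ x' = y' then 2 else 0 := by
  have sum_two (f : ZMod 2 → ℂ) : ∑ s, f s = f 0 + f 1 := Fin.sum_univ_two f
  simp only [pauliQubit_eq, Fintype.sum_prod_type, sum_two]
  fin_cases x <;> fin_cases x' <;> fin_cases y <;> fin_cases y' <;> simp +decide <;> norm_num

/-- Indexing by `c : Fin m → ZMod 2 × ZMod 2` makes the phase space an additive group. -/
noncomputable def pauli {m : ℕ} (c : Fin m → ZMod 2 × ZMod 2) :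
    Matrix (Fin m → Fin 2) (Fin m → Fin 2) ℂ :=
  PauliD (fun j => (c j).1) (fun j => (c j).2)

section Pauli

variable {m : ℕ}

lemma pauli_eq_piKronecker (c : Fin m → ZMod 2 × ZMod 2) :
    pauli c = piKronecker fun j => pauliQubit (c j) :=
  rfl

lemma pauli_mul (c d : Fin m → ZMod 2 × ZMod 2) :
    pauli c * pauli d = (∏ j, (-1 : ℂ) ^ ((c j).2.val * (d j).1.val)) • pauli (c + d) := by
  ext x y
  simp only [pauli_eq_piKronecker, piKronecker_mul, pauliQubit_mul, piKronecker,
    Matrix.smul_apply, smul_eq_mul, prod_mul_distrib, Pi.add_apply]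

lemma pauli_mem_unitaryGroup (c : Fin m → ZMod 2 × ZMod 2) :
    pauli c ∈ unitaryGroup (Fin m → Fin 2) ℂ :=
  piKronecker_mem_unitaryGroup fun j => pauliQubit_mem_unitaryGroup (c j)

lemma trace_pauli_mul_conjTranspose (c d : Fin m → ZMod 2 × ZMod 2) :
    (pauli c * (pauli d)ᴴ).trace = if c = d then 2 ^ m else 0 := by
  simp only [pauli_eq_piKronecker, conjTranspose_piKronecker, piKronecker_mul, trace_piKronecker,
    trace_pauliQubit_mul_conjTranspose, Fintype.prod_ite_zero, prod_const, card_univ,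
    Fintype.card_fin, funext_iff]

lemma sum_pauli_mul_mul_conjTranspose (M : Matrix (Fin m → Fin 2) (Fin m → Fin 2) ℂ) :
    ∑ c, pauli c * M * (pauli c)ᴴ = (2 ^ m * M.trace) • 1 := by
  refine sum_mul_mul_conjTranspose_eq_of_completeness (fun x x' y y' => ?_) M
  have h := sum_piKronecker_apply_mul_star (ι := Fin m) sum_pauliQubit_apply_mul_star x x' y y'
  rw [Fintype.card_fin] at h
  exact h

lemma eq_of_smul_pauli_eq_smul_pauli {α β : ℂ} {c d : Fin m → ZMod 2 × ZMod 2} (hα : α ≠ 0)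
    (h : α • pauli c = β • pauli d) : c = d := by
  by_contra hcd
  have := congrArg (fun M => (M * (pauli c)ᴴ).trace) h
  simp only [smul_mul, trace_smul, trace_pauli_mul_conjTranspose, if_pos, if_neg (Ne.symm hcd),
    smul_eq_mul, mul_zero] at this
  exact mul_ne_zero hα (pow_ne_zero m two_ne_zero) this

end Pauli

section Conjugation

variable {n R : Type*} [Fintype n] [DecidableEq n] [Field R] [StarRing R]
  {G P : Matrix n n R} {e : R}

lemma mul_eq_smul_mul_of_conj_eq_smul (hG : G ∈ unitaryGroup n R) (h : Gᴴ * P * G = e • P) :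
    P * G = e • (G * P) := by
  calc P * G = G * (Gᴴ * P * G) := by
        rw [← Matrix.mul_assoc, ← Matrix.mul_assoc, ← star_eq_conjTranspose,
          mem_unitaryGroup_iff.mp hG, Matrix.one_mul]
    _ = e • (G * P) := by rw [h, Matrix.mul_smul]

/-- `tr G = tr (P G Pᴴ) = e tr G`. -/
lemma trace_eq_zero_of_conj_eq_smul (hG : G ∈ unitaryGroup n R) (hP : P ∈ unitaryGroup n R)
    (h : Gᴴ * P * G = e • P) (he : e ≠ 1) : G.trace = 0 := by
  have hPG := mul_eq_smul_mul_of_conj_eq_smul hG h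
  have htrace : G.trace = e * G.trace :=
    calc G.trace = (Pᴴ * P * G).trace := by
          rw [← star_eq_conjTranspose, mem_unitaryGroup_iff'.mp hP, Matrix.one_mul]
      _ = (P * G * Pᴴ).trace := (trace_mul_cycle P G Pᴴ).symm
      _ = e * G.trace := by
          rw [hPG, smul_mul, Matrix.mul_assoc, ← star_eq_conjTranspose,
            mem_unitaryGroup_iff.mp hP, Matrix.mul_one, trace_smul, smul_eq_mul]
  have : (1 - e) * G.trace = 0 := by linear_combination htrace
  exact (mul_eq_zero.mp this).resolve_left (sub_ne_zero.mpr he.symm)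

end Conjugation

lemma two_mul_card_fixedPoints_le_card {A : Type*} [AddGroup A] [Fintype A] [DecidableEq A]
    (F : A →+ A) {a₀ : A} (ha₀ : F a₀ ≠ a₀) : 2 * #{a | F a = a} ≤ Fintype.card A := by
  set S : Finset A := {a | F a = a}
  have hmaps : Set.MapsTo (· + a₀) S (Sᶜ : Finset A) := by
    intro a ha
    rw [mem_coe, mem_filter] at ha
    rw [mem_coe, mem_compl, mem_filter, map_add, ha.2]
    exact fun h => ha₀ (add_left_cancel h.2)
  have := card_le_card_of_injOn _ hmaps (add_left_injective a₀).injOn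
  rw [card_compl] at this
  omega

section Clifford

variable {m : ℕ} {G : Matrix (Fin m → Fin 2) (Fin m → Fin 2) ℂ}
  {ε : (Fin m → ZMod 2 × ZMod 2) → ℂ} {F : (Fin m → ZMod 2 × ZMod 2) → Fin m → ZMod 2 × ZMod 2}

lemma exists_conj_pauli_eq_smul (hCliff : ∀ P ∈ PauliGroup m, Gᴴ * P * G ∈ PauliGroup m)
    (c : Fin m → ZMod 2 × ZMod 2) :
    ∃ (e : ℂ) (d : Fin m → ZMod 2 × ZMod 2), ‖e‖ = 1 ∧ Gᴴ * pauli c * G = e • pauli d := by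
  obtain ⟨κ, a, b, h⟩ := hCliff (pauli c) ⟨0, _, _, (one_smul ℂ _).symm⟩
  exact ⟨Complex.I ^ κ, fun j => (a j, b j), by simp, h⟩

/-- Twirling `G` gives back `4 ^ m • G`, while the twirl of any matrix is a multiple of the
identity. -/
lemma exists_eq_smul_one_of_forall_conj_pauli_eq (hG : G ∈ unitaryGroup _ ℂ)
    (h : ∀ c, Gᴴ * pauli c * G = pauli c) : ∃ s : ℂ, G = s • 1 := by
  have hfix : ∀ c, pauli c * G * (pauli c)ᴴ = G := by
    intro c
    have hcomm := mul_eq_smul_mul_of_conj_eq_smul (e := 1) hG (by rw [one_smul]; exact h c)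
    rw [one_smul] at hcomm
    rw [hcomm, Matrix.mul_assoc, ← star_eq_conjTranspose,
      mem_unitaryGroup_iff.mp (pauli_mem_unitaryGroup c), Matrix.mul_one]
  have htwirl := sum_pauli_mul_mul_conjTranspose G
  simp only [hfix, sum_const, card_univ] at htwirl
  have hcard : (Fintype.card (Fin m → ZMod 2 × ZMod 2) : ℂ) ≠ 0 :=
    Nat.cast_ne_zero.mpr Fintype.card_ne_zero
  refine ⟨(Fintype.card (Fin m → ZMod 2 × ZMod 2) : ℂ)⁻¹ * (2 ^ m * G.trace), ?_⟩
  rw [mul_smul, ← htwirl, ← Nat.cast_smul_eq_nsmul ℂ, smul_smul, inv_mul_cancel₀ hcard, one_smul]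

lemma map_add_of_conj_pauli (hG : G ∈ unitaryGroup _ ℂ) (hε : ∀ c, ε c ≠ 0)
    (hGF : ∀ c, Gᴴ * pauli c * G = ε c • pauli (F c)) (c d : Fin m → ZMod 2 × ZMod 2) :
    F (c + d) = F c + F d := by
  have phase_ne_zero : ∀ c d : Fin m → ZMod 2 × ZMod 2,
      ∏ j, (-1 : ℂ) ^ ((c j).2.val * (d j).1.val) ≠ 0 :=
    fun _ _ => prod_ne_zero_iff.mpr fun _ _ => pow_ne_zero _ (neg_ne_zero.mpr one_ne_zero)
  have hconj : Gᴴ * (pauli c * pauli d) * G = (Gᴴ * pauli c * G) * (Gᴴ * pauli d * G) := by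
    simp only [Matrix.mul_assoc]
    rw [← Matrix.mul_assoc G, ← star_eq_conjTranspose, mem_unitaryGroup_iff.mp hG, Matrix.one_mul]
  rw [pauli_mul, hGF, hGF, smul_mul, Matrix.mul_smul, smul_mul, Matrix.mul_smul, hGF, pauli_mul,
    smul_smul, smul_smul, smul_smul] at hconj
  exact eq_of_smul_pauli_eq_smul_pauli (mul_ne_zero (phase_ne_zero c d) (hε _)) hconj

/-- Compute the trace of `Gᴴ` times the Pauli twirl of `G` in two ways. -/
lemma sq_norm_trace_le_card_fixedPoints (hε : ∀ c, ‖ε c‖ = 1)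
    (hGF : ∀ c, Gᴴ * pauli c * G = ε c • pauli (F c)) :
    ‖G.trace‖ ^ 2 ≤ #{c | F c = c} := by
  have key : (2 ^ m : ℂ) * (G.trace * star G.trace) = ∑ c, ε c * if F c = c then 2 ^ m else 0 :=
    calc (2 ^ m : ℂ) * (G.trace * star G.trace)
        = (Gᴴ * ∑ c, pauli c * G * (pauli c)ᴴ).trace := by
          rw [sum_pauli_mul_mul_conjTranspose, Matrix.mul_smul, Matrix.mul_one, trace_smul,
            trace_conjTranspose, smul_eq_mul]
          ring
      _ = ∑ c, (Gᴴ * pauli c * G * (pauli c)ᴴ).trace := by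
          simp only [mul_sum, trace_sum, Matrix.mul_assoc]
      _ = ∑ c, ε c * if F c = c then 2 ^ m else 0 := by
          simp only [hGF, smul_mul, trace_smul, trace_pauli_mul_conjTranspose, smul_eq_mul]
  have hbound : (2 : ℝ) ^ m * ‖G.trace‖ ^ 2 ≤ 2 ^ m * #{c | F c = c} :=
    calc (2 : ℝ) ^ m * ‖G.trace‖ ^ 2 = ‖(2 ^ m : ℂ) * (G.trace * star G.trace)‖ := by
          simp [sq]
      _ ≤ ∑ c, ‖ε c * if F c = c then (2 : ℂ) ^ m else 0‖ := key ▸ norm_sum_le _ _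
      _ = 2 ^ m * #{c | F c = c} := by
          simp [apply_ite, hε, sum_ite, mul_comm]
  exact le_of_mul_le_mul_left hbound (by positivity)

end Clifford

lemma two_mul_sq_norm_trace_le_of_clifford {m : ℕ} {G : Matrix (Fin m → Fin 2) (Fin m → Fin 2) ℂ}
    (hG : G ∈ unitaryGroup _ ℂ) (hCliff : ∀ P ∈ PauliGroup m, Gᴴ * P * G ∈ PauliGroup m)
    (hnotscalar : ¬ ∃ s : ℂ, G = s • 1) :
    2 * ‖G.trace‖ ^ 2 ≤ 4 ^ m := by
  choose ε F hε hGF using exists_conj_pauli_eq_smul hCliff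
  by_cases hF : ∀ c, F c = c
  · by_cases hε1 : ∀ c, ε c = 1
    · exact absurd (exists_eq_smul_one_of_forall_conj_pauli_eq hG
        fun c => by rw [hGF, hε1, hF, one_smul]) hnotscalar
    · obtain ⟨c, hc⟩ := not_forall.mp hε1
      rw [trace_eq_zero_of_conj_eq_smul hG (pauli_mem_unitaryGroup c) (by rw [hGF, hF]) hc]
      simp
  · obtain ⟨c₀, hc₀⟩ := not_forall.mp hF
    have hε0 : ∀ c, ε c ≠ 0 := fun c => norm_ne_zero_iff.mp (by simp [hε c])
    have hcard := two_mul_card_fixedPoints_le_card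
      (AddMonoidHom.mk' F (map_add_of_conj_pauli hG hε0 hGF)) hc₀
    have hcard' : (2 * #{c | F c = c} : ℝ) ≤ 4 ^ m := by
      simpa [Fintype.card_prod, ZMod.card, show 2 * 2 = 4 from rfl] using
        (Nat.cast_le (α := ℝ)).mpr hcard
    linarith [sq_norm_trace_le_card_fixedPoints hε hGF]

lemma le_div_sqrt_two_and_sqrt_le_of_two_mul_sq_le {t N : ℝ} (ht : 0 ≤ t) (hN : 0 < N)
    (h : 2 * t ^ 2 ≤ N ^ 2) :
    t ≤ N / √2 ∧ √(1 - 1 / √2) ≤ √(1 - t / N) := by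
  have hs2 : (0 : ℝ) < √2 := by positivity
  have hmul : t * √2 ≤ N := by
    refine (pow_le_pow_iff_left₀ (by positivity) hN.le two_ne_zero).mp ?_
    rw [mul_pow, Real.sq_sqrt zero_le_two]
    linarith
  refine ⟨(le_div_iff₀ hs2).mpr hmul, Real.sqrt_le_sqrt ?_⟩
  have : t / N ≤ 1 / √2 := by
    rw [div_le_div_iff₀ hN hs2]
    linarith
  linarith

theorem stmt_8_general (m : ℕ) (G : Matrix (Fin m → Fin 2) (Fin m → Fin 2) ℂ)
    (hG : G ∈ Matrix.unitaryGroup (Fin m → Fin 2) ℂ)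
    (hCliff : ∀ P ∈ PauliGroup m, Gᴴ * P * G ∈ PauliGroup m)
    (hnotscalar : ¬ ∃ c : ℂ, G = c • (1 : Matrix (Fin m → Fin 2) (Fin m → Fin 2) ℂ)) :
    ‖G.trace‖ ≤ (2 ^ m : ℕ) / Real.sqrt 2 ∧
    Real.sqrt (1 - 1 / Real.sqrt 2) ≤
      Real.sqrt (1 - ‖G.trace‖ / (2 ^ m : ℕ)) := by
  refine le_div_sqrt_two_and_sqrt_le_of_two_mul_sq_le (norm_nonneg _) (by positivity) ?_
  refine (two_mul_sq_norm_trace_le_of_clifford hG hCliff hnotscalar).trans_eq ?_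
  push_cast
  rw [← pow_mul, mul_comm, pow_mul]
  norm_num

theorem stmt_8 (m : ℕ) (hm : 1 ≤ m) (G : Matrix (Fin m → Fin 2) (Fin m → Fin 2) ℂ)
    (hG : G ∈ Matrix.unitaryGroup (Fin m → Fin 2) ℂ)
    (hCliff : ∀ P ∈ PauliGroup m, Gᴴ * P * G ∈ PauliGroup m)
    (hnotscalar : ¬ ∃ c : ℂ, G = c • (1 : Matrix (Fin m → Fin 2) (Fin m → Fin 2) ℂ)) :
    ‖G.trace‖ ≤ (2 ^ m : ℕ) / Real.sqrt 2 ∧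
    Real.sqrt (1 - 1 / Real.sqrt 2) ≤
      Real.sqrt (1 - ‖G.trace‖ / (2 ^ m : ℕ)) :=
  stmt_8_general m G hG hCliff hnotscalar
end

section
/- Let n be even and δ ∈ [0,1]. Suppose θ_1,…,θ_n take only two values θ (with multiplicity n/2 − k) and φ (with multiplicity n/2 + k) for some integer k with |k| < n/2, and satisfy |∑_j e^{iθ_j}| = n(1−δ²) with δ > 0. If additionally the configuration maximizes |∑_j e^{iθ_j/2}| subject to this constraint over such two-value configurations, then necessarily cos(θ−φ) = ((n(1−δ²))² − n²/2 − 2k²)/(2(n²/4 − k²)), and this quantity lies in [−1,1] for all δ ∈ [0,1] if and only if k = 0. -/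
/-!
By the law of cosines, `‖a e^{iθ} + b e^{iφ}‖² = a² + b² + 2ab cos (θ - φ)`; with
`a, b = n/2 ∓ k` this is linear in `cos (θ - φ)` with coefficient `2 (n²/4 - k²) > 0`, which
yields the formula. At `δ = 1` the formula equals `-(n²/2 + 2k²) / (n²/2 - 2k²)`, which is
`≥ -1` only for `k = 0`; conversely, for `k = 0` it equals `2 (1 - δ²)² - 1 ∈ [-1, 1]`.
-/

open Complex

/-- The candidate value of `cos (θ - φ)` forced by the two-group constraint. -/
noncomputable def cosFormula (n : ℕ) (k : ℤ) (δ : ℝ) : ℝ :=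
  (((n : ℝ) * (1 - δ ^ 2)) ^ 2 - (n : ℝ) ^ 2 / 2 - 2 * (k : ℝ) ^ 2) /
    (2 * ((n : ℝ) ^ 2 / 4 - (k : ℝ) ^ 2))

theorem norm_sq_mul_exp_add_mul_exp (a b θ φ : ℝ) :
    ‖(a : ℂ) * exp (I * θ) + b * exp (I * φ)‖ ^ 2 = a ^ 2 + b ^ 2 + 2 * a * b * Real.cos (θ - φ) := by
  have hz : (a : ℂ) * exp (I * θ) + b * exp (I * φ) =
      ((a * Real.cos θ + b * Real.cos φ : ℝ) : ℂ) + ((a * Real.sin θ + b * Real.sin φ : ℝ) : ℂ) * I := by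
    rw [mul_comm I, mul_comm I, exp_mul_I, exp_mul_I]
    push_cast [ofReal_cos, ofReal_sin]
    ring
  rw [hz, Complex.sq_norm, normSq_add_mul_I, Real.cos_sub]
  linear_combination a ^ 2 * Real.sin_sq_add_cos_sq θ + b ^ 2 * Real.sin_sq_add_cos_sq φ

theorem cosFormula_denom_pos {n : ℕ} {k : ℤ} (hk : 2 * |k| < n) :
    0 < (n : ℝ) ^ 2 / 4 - (k : ℝ) ^ 2 := by
  have hkR : 2 * |(k : ℝ)| < n := by exact_mod_cast hk
  nlinarith [sq_abs (k : ℝ), abs_nonneg (k : ℝ)]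

theorem cos_sub_eq_cosFormula {n : ℕ} {k : ℤ} (hk : 2 * |k| < n) {θ φ δ : ℝ}
    (h : ‖((n : ℂ) / 2 - k) * exp (I * θ) + ((n : ℂ) / 2 + k) * exp (I * φ)‖ = n * (1 - δ ^ 2)) :
    Real.cos (θ - φ) = cosFormula n k δ := by
  have hlaw := norm_sq_mul_exp_add_mul_exp ((n : ℝ) / 2 - k) ((n : ℝ) / 2 + k) θ φ
  push_cast at hlaw
  rw [h] at hlaw
  rw [cosFormula, eq_div_iff (by linarith [cosFormula_denom_pos hk])]
  linear_combination -hlaw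

theorem neg_one_le_cosFormula_one_iff {n : ℕ} {k : ℤ} (hk : 2 * |k| < n) :
    -1 ≤ cosFormula n k 1 ↔ k = 0 := by
  have hden := cosFormula_denom_pos hk
  rw [cosFormula, le_div_iff₀ (by linarith)]
  constructor
  · intro h
    have hk0 : (k : ℝ) ^ 2 = 0 := le_antisymm (by nlinarith) (sq_nonneg _)
    exact_mod_cast pow_eq_zero_iff two_ne_zero |>.mp hk0
  · rintro rfl
    push_cast
    linarith

theorem cosFormula_zero {n : ℕ} (hn : n ≠ 0) (δ : ℝ) :
    cosFormula n 0 δ = 2 * (1 - δ ^ 2) ^ 2 - 1 := by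
  have hn' : (n : ℝ) ≠ 0 := by exact_mod_cast hn
  rw [cosFormula]
  push_cast
  field_simp
  ring

theorem cosFormula_zero_mem_Icc {n : ℕ} (hn : n ≠ 0) {δ : ℝ} (hδ₀ : 0 ≤ δ) (hδ₁ : δ ≤ 1) :
    cosFormula n 0 δ ∈ Set.Icc (-1) 1 := by
  have h₀ : 0 ≤ 1 - δ ^ 2 := by nlinarith
  have h₁ : 1 - δ ^ 2 ≤ 1 := by nlinarith
  rw [cosFormula_zero hn]
  constructor <;> nlinarith

theorem stmt_14_general (n : ℕ) (k : ℤ) (hk : 2 * |k| < n) :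
    (∀ (θ φ δ : ℝ), 0 < δ → δ ≤ 1 →
      ‖((n : ℂ) / 2 - (k : ℂ)) * Complex.exp (Complex.I * (θ : ℂ)) +
          ((n : ℂ) / 2 + (k : ℂ)) * Complex.exp (Complex.I * (φ : ℂ))‖ = n * (1 - δ ^ 2) →
      Real.cos (θ - φ) = cosFormula n k δ) ∧
    ((∀ δ : ℝ, 0 ≤ δ → δ ≤ 1 → -1 ≤ cosFormula n k δ ∧ cosFormula n k δ ≤ 1) ↔ k = 0) := by
  refine ⟨fun θ φ δ _ _ h ↦ cos_sub_eq_cosFormula hk h, fun hbounds ↦ ?_, ?_⟩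
  · exact (neg_one_le_cosFormula_one_iff hk).mp (hbounds 1 zero_le_one le_rfl).1
  · rintro rfl δ hδ₀ hδ₁
    have hn : n ≠ 0 := by rintro rfl; simp at hk
    exact cosFormula_zero_mem_Icc hn hδ₀ hδ₁

theorem stmt_14 (n : ℕ) (hn : 0 < n) (hev : Even n) (k : ℤ) (hk : 2 * |k| < n) :
    (∀ (θ φ δ : ℝ), 0 < δ → δ ≤ 1 →
      ‖((n : ℂ) / 2 - (k : ℂ)) * Complex.exp (Complex.I * (θ : ℂ)) +
          ((n : ℂ) / 2 + (k : ℂ)) * Complex.exp (Complex.I * (φ : ℂ))‖ = n * (1 - δ ^ 2) →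
      Real.cos (θ - φ) = cosFormula n k δ) ∧
    ((∀ δ : ℝ, 0 ≤ δ → δ ≤ 1 → -1 ≤ cosFormula n k δ ∧ cosFormula n k δ ≤ 1) ↔ k = 0) :=
  stmt_14_general n k hk
end
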